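/- Let (A,[·,·,·]) be a 3-Lie algebra over a field K of characteristic 0 and let R1, R2 be Rota-Baxter operators of weight 0 on A with R1∘R2 = R2∘R1. Then the operations ↖(x,y,z) := [R1R2(x), R1R2(y), z] and ↗(x,y,z) := [R1(x), R1R2(y), R2(z)] define a 3-L-dendriform algebra structure on A. -/
import Mathlib


universe u v w

variable (K : Type u) [Field K] [CharZero K]

section MultilinearDefs

variable {M₁ M₂ M₃ M₄ : Type*}
  [AddCommGroup M₁] [Module K M₁] [AddCommGroup M₂] [Module K M₂]
  [AddCommGroup M₃] [Module K M₃] [AddCommGroup M₄] [Module K M₄]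

/-- A map `f : M₁ → M₂ → M₃ → M₄` which is `K`-linear in each of its three arguments. -/
def IsTrilinearMap (f : M₁ → M₂ → M₃ → M₄) : Prop :=
  (∀ (c : K) (x x' : M₁) (y : M₂) (z : M₃), f (c • x + x') y z = c • f x y z + f x' y z) ∧
  (∀ (c : K) (x : M₁) (y y' : M₂) (z : M₃), f x (c • y + y') z = c • f x y z + f x y' z) ∧
  (∀ (c : K) (x : M₁) (y : M₂) (z z' : M₃), f x y (c • z + z') = c • f x y z + f x y z')

end MultilinearDefs

section Algebras

variable {A : Type*} [AddCommGroup A] [Module K A]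
variable {V : Type*} [AddCommGroup V] [Module K V]

/-- The induced 3-commutator `[x,y,z]^C = {x,y,z} + {y,z,x} + {z,x,y}` of a ternary
operation. -/
def preC (p : A → A → A → A) : A → A → A → A :=
  fun x y z => p x y z + p y z x + p z x y

/-- A (trilinear) bracket makes `A` a 3-Lie algebra: it is skew-symmetric (alternating)
and satisfies the fundamental identity. -/
def Is3Lie (br : A → A → A → A) : Prop :=
  IsTrilinearMap K br ∧
  (∀ x y z : A, br x y z = - br y x z) ∧
  (∀ x y z : A, br x y z = - br x z y) ∧
  (∀ x1 x2 x3 x4 x5 : A,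
    br x1 x2 (br x3 x4 x5)
      = br (br x1 x2 x3) x4 x5 + br x3 (br x1 x2 x4) x5 + br x3 x4 (br x1 x2 x5))

/-- A (trilinear) operation makes `A` a 3-pre-Lie algebra: (P0), (P1), (P2). -/
def Is3PreLie (p : A → A → A → A) : Prop :=
  IsTrilinearMap K p ∧
  (∀ x y z : A, p x y z = - p y x z) ∧
  (∀ x1 x2 x3 x4 x5 : A,
    p x1 x2 (p x3 x4 x5)
      = p (preC p x1 x2 x3) x4 x5 + p x3 (preC p x1 x2 x4) x5 + p x3 x4 (p x1 x2 x5)) ∧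
  (∀ x1 x2 x3 x4 x5 : A,
    p (preC p x1 x2 x3) x4 x5
      = p x1 x2 (p x3 x4 x5) + p x2 x3 (p x1 x4 x5) + p x3 x1 (p x2 x4 x5))

/-- `ρ` is a representation of the 3-Lie algebra `(A, br)` on `V`. -/
def Is3LieRep (br : A → A → A → A) (ρ : A → A → V → V) : Prop :=
  IsTrilinearMap K ρ ∧
  (∀ (x y : A) (v : V), ρ x y v = - ρ y x v) ∧
  (∀ (x1 x2 x3 x4 : A) (v : V),
    ρ x1 x2 (ρ x3 x4 v) - ρ x3 x4 (ρ x1 x2 v)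
      = ρ (br x1 x2 x3) x4 v - ρ (br x1 x2 x4) x3 v) ∧
  (∀ (x1 x2 x3 x4 : A) (v : V),
    ρ (br x1 x2 x3) x4 v
      = ρ x1 x2 (ρ x3 x4 v) + ρ x2 x3 (ρ x1 x4 v) + ρ x3 x1 (ρ x2 x4 v))

/-- `(l, r)` is a representation of the 3-pre-Lie algebra `(A, p)` on `V`:
`l` is skew-symmetric and a representation of the sub-adjacent 3-Lie algebra,
together with conditions (rep1)-(rep4), where `μ(x,y) = l(x,y) + r(x,y) - r(y,x)`. -/
def Is3PreLieRep (p : A → A → A → A) (l r : A → A → V → V) : Prop :=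
  IsTrilinearMap K l ∧ IsTrilinearMap K r ∧
  Is3LieRep K (preC p) l ∧
  (∀ (x1 x2 x3 x4 : A) (v : V),
    l x1 x2 (r x3 x4 v)
      = r x3 x4 (l x1 x2 v + r x1 x2 v - r x2 x1 v)
        + r (preC p x1 x2 x3) x4 v + r x3 (p x1 x2 x4) v) ∧
  (∀ (x1 x2 x3 x4 : A) (v : V),
    r (preC p x1 x2 x3) x4 v
      = l x1 x2 (r x3 x4 v) + l x2 x3 (r x1 x4 v) + l x3 x1 (r x2 x4 v)) ∧
  (∀ (x1 x2 x3 x4 : A) (v : V),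
    r x1 (p x2 x3 x4) v
      = r x3 x4 (l x1 x2 v + r x1 x2 v - r x2 x1 v)
        - r x2 x4 (l x1 x3 v + r x1 x3 v - r x3 x1 v) + l x2 x3 (r x1 x4 v)) ∧
  (∀ (x1 x2 x3 x4 : A) (v : V),
    r x3 x4 (l x1 x2 v + r x1 x2 v - r x2 x1 v)
      = l x1 x2 (r x3 x4 v) - r x2 (p x1 x3 x4) v + r x1 (p x2 x3 x4) v)

/-- `T : V → A` is an `𝒪`-operator on the 3-Lie algebra `(A, br)` associated to the
representation `ρ` of `A` on `V`. -/
def IsOOperator3Lie (br : A → A → A → A) (ρ : A → A → V → V) (T : V →ₗ[K] A) : Prop :=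
  ∀ u v w : V,
    br (T u) (T v) (T w) = T (ρ (T u) (T v) w + ρ (T v) (T w) u + ρ (T w) (T u) v)

/-- `T : V → A` is an `𝒪`-operator on the 3-pre-Lie algebra `(A, p)` associated to the
representation `(l, r)` of `A` on `V`. -/
def IsOOperator3PreLie (p : A → A → A → A) (l r : A → A → V → V) (T : V →ₗ[K] A) : Prop :=
  ∀ u v w : V,
    p (T u) (T v) (T w) = T (l (T u) (T v) w - r (T u) (T w) v + r (T v) (T w) u)

/-- `R : A → A` is a Rota-Baxter operator of weight 0 on the ternary algebra `(A, br)`. -/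
def IsRotaBaxter3 (br : A → A → A → A) (R : A →ₗ[K] A) : Prop :=
  ∀ x y z : A,
    br (R x) (R y) (R z) = R (br (R x) (R y) z + br (R x) y (R z) + br x (R y) (R z))

/-- The horizontal operation `{x,y,z}^h = ↖(x,y,z) + ↗(x,y,z) - ↗(y,x,z)`. -/
def hOp (nw ne : A → A → A → A) : A → A → A → A :=
  fun x y z => nw x y z + ne x y z - ne y x z

/-- The vertical operation `{x,y,z}^v = ↖(x,y,z) + ↗(z,x,y) - ↗(z,y,x)`. -/
def vOp (nw ne : A → A → A → A) : A → A → A → A :=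
  fun x y z => nw x y z + ne z x y - ne z y x

/-- The bracket `[x,y,z]^C = {x,y,z}^h + {y,z,x}^h + {z,x,y}^h`. -/
def cOp (nw ne : A → A → A → A) : A → A → A → A :=
  fun x y z => hOp nw ne x y z + hOp nw ne y z x + hOp nw ne z x y

/-- `(A, nw, ne)` (with `nw = ↖`, `ne = ↗`) is a 3-L-dendriform algebra: axioms (L0)-(L6). -/
def Is3LDendriform (nw ne : A → A → A → A) : Prop :=
  IsTrilinearMap K nw ∧ IsTrilinearMap K ne ∧
  (∀ x1 x2 x3 : A, nw x1 x2 x3 + nw x2 x1 x3 = 0) ∧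
  (∀ x1 x2 x3 x4 x5 : A,
    nw x1 x2 (nw x3 x4 x5) - nw x3 x4 (nw x1 x2 x5)
      = nw (cOp nw ne x1 x2 x3) x4 x5 - nw (cOp nw ne x1 x2 x4) x3 x5) ∧
  (∀ x1 x2 x3 x4 x5 : A,
    nw x1 x2 (ne x5 x3 x4) - ne x5 x3 (hOp nw ne x1 x2 x4)
      = ne x5 (cOp nw ne x1 x2 x3) x4 + ne (vOp nw ne x1 x2 x5) x3 x4) ∧
  (∀ x1 x2 x3 x4 x5 : A,
    ne x5 x1 (hOp nw ne x2 x3 x4) - nw x2 x3 (ne x5 x1 x4)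
      = ne (vOp nw ne x1 x2 x5) x3 x4 - ne (vOp nw ne x1 x3 x5) x2 x4) ∧
  (∀ x1 x2 x3 x4 x5 : A,
    nw (cOp nw ne x1 x2 x3) x4 x5
      = nw x1 x2 (nw x3 x4 x5) + nw x2 x3 (nw x1 x4 x5) + nw x3 x1 (nw x2 x4 x5)) ∧
  (∀ x1 x2 x3 x4 x5 : A,
    ne x5 (cOp nw ne x1 x2 x3) x4
      = nw x1 x2 (ne x5 x3 x4) + nw x2 x3 (ne x5 x1 x4) + nw x3 x1 (ne x5 x2 x4)) ∧
  (∀ x1 x2 x3 x4 x5 : A,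
    nw x1 x2 (ne x5 x3 x4) + ne x5 x1 (hOp nw ne x2 x3 x4)
      = ne x5 x2 (hOp nw ne x1 x3 x4) + ne (vOp nw ne x1 x2 x5) x3 x4)

end Algebras

/-- Commuting Rota-Baxter operators `R1, R2` of weight 0 on a 3-Lie algebra
induce a 3-L-dendriform structure `↖(x,y,z) = [R1R2(x),R1R2(y),z]`,
`↗(x,y,z) = [R1(x),R1R2(y),R2(z)]` on `A`. -/
theorem stmt19 {A : Type v} [AddCommGroup A] [Module K A]
    (br : A → A → A → A) (hbr : Is3Lie K br)
    (R1 R2 : A →ₗ[K] A)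
    (h1 : IsRotaBaxter3 K br R1) (h2 : IsRotaBaxter3 K br R2)
    (hcomm : ∀ x : A, R1 (R2 x) = R2 (R1 x)) :
    Is3LDendriform K (fun x y z => br (R1 (R2 x)) (R1 (R2 y)) z)
      (fun x y z => br (R1 x) (R1 (R2 y)) (R2 z)) := by
  obtain ⟨⟨t1, t2, t3⟩, hsw1, hsw2, FI⟩ := hbr
  -- basic linearity consequences
  have z1 : ∀ y z : A, br 0 y z = 0 := by
    intro y z
    have h := t1 (-1 : K) 0 0 y z
    rw [smul_zero, add_zero, neg_one_smul, neg_add_cancel] at h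
    exact h
  have z2 : ∀ x z : A, br x 0 z = 0 := by
    intro x z
    have h := t2 (-1 : K) x 0 0 z
    rw [smul_zero, add_zero, neg_one_smul, neg_add_cancel] at h
    exact h
  have neg1 : ∀ x y z : A, br (-x) y z = - br x y z := by
    intro x y z
    have h := t1 (-1 : K) x 0 y z
    rw [add_zero, neg_one_smul, neg_one_smul, z1, add_zero] at h
    exact h
  have neg2 : ∀ x y z : A, br x (-y) z = - br x y z := by
    intro x y z
    have h := t2 (-1 : K) x y 0 z
    rw [add_zero, neg_one_smul, neg_one_smul, z2, add_zero] at h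
    exact h
  have hcyc : ∀ x y z : A, br x y z = br y z x := by
    intro x y z
    rw [hsw1 x y z, hsw2 y x z, neg_neg]
  have hcyc2 : ∀ x y z : A, br x y z = br z x y := fun x y z =>
    (hcyc x y z).trans (hcyc y z x)
  -- derived 3-Lie identities
  have idD : ∀ a b c d e : A, br (br a b c) d e
      = br a b (br c d e) + br b c (br a d e) + br c a (br b d e) := by
    intro a b c d e
    have h := FI d e a b c
    rw [hcyc2 d e a, hcyc2 d e b, hcyc2 d e c] at h
    rw [hcyc2 d e (br a b c)] at h
    rw [hcyc (br a d e) b c] at h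
    rw [hcyc2 a (br b d e) c] at h
    exact h.trans (by abel)
  have idF : ∀ a b c d e : A, br (br a b c) d e
      = br (br a b d) c e - br (br a c d) b e + br (br b c d) a e := by
    intro a b c d e
    have h1 := FI a d b c e
    have h2 := FI b c a d e
    have e1 : br (br a d b) c e = - br (br a b d) c e := by
      rw [hsw2 a d b, neg1]
    have e2 : br b (br a d c) e = br (br a c d) b e := by
      rw [hsw2 a d c, neg2, hsw1 b (br a c d) e, neg_neg]
    have e3 : br (br b c a) d e = br (br a b c) d e := by rw [hcyc2 b c a]
    have e4 : br a (br b c d) e = - br (br b c d) a e := hsw1 a (br b c d) e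
    rw [e1, e2] at h1
    rw [e3, e4] at h2
    have k2 : br b c (br a d e) - br a d (br b c e)
        = br (br a b c) d e - br (br b c d) a e := by
      rw [h2]; abel
    have k1 : br a d (br b c e) - br b c (br a d e)
        = - br (br a b d) c e + br (br a c d) b e := by
      rw [h1]; abel
    have k5 : br (br a b c) d e - br (br b c d) a e
        = -(- br (br a b d) c e + br (br a c d) b e) := by
      rw [← k2, ← k1]; abel
    calc br (br a b c) d e
        = (br (br a b c) d e - br (br b c d) a e) + br (br b c d) a e := by abel
      _ = -(- br (br a b d) c e + br (br a c d) b e) + br (br b c d) a e := by rw [k5]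
      _ = br (br a b d) c e - br (br a c d) b e + br (br b c d) a e := by abel
  have idL1 : ∀ a b c d e : A, br a b (br c d e) - br c d (br a b e)
      = br (br a b c) d e - br (br a b d) c e := by
    intro a b c d e
    have h := FI a b c d e
    rw [hsw1 c (br a b d) e] at h
    rw [h]; abel
  have idL2 : ∀ a b c u w : A, br a b (br u c w) - br u c (br a b w)
      = br u (br a b c) w + br (br a b u) c w := by
    intro a b c u w
    have h := FI a b u c w
    rw [h]; abel
  have idL3 : ∀ a b c u w : A, br u a (br b c w) - br b c (br u a w)
      = br (br a b u) c w - br (br a c u) b w := by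
    intro a b c u w
    have h := FI b c u a w
    rw [hcyc2 b c a] at h
    rw [hsw1 u (br a b c) w] at h
    rw [idF a b c u w] at h
    rw [h]; abel
  have idL5 : ∀ a b c u w : A, br u (br a b c) w
      = br a b (br u c w) + br b c (br u a w) + br c a (br u b w) := by
    intro a b c u w
    rw [hcyc u (br a b c) w, hcyc u c w, hcyc u a w, hcyc u b w]
    exact idD a b c w u
  have idL6 : ∀ a b c u w : A, br a b (br u c w) + br u a (br b c w)
      = br u b (br a c w) + br (br a b u) c w := by
    intro a b c u w
    have h := FI a b u c w
    have e0 : br u (br a b c) w = br (br a b c) w u := hcyc u (br a b c) w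
    have e1 : br u c (br a b w) = - br (br a b w) c u := by
      rw [hcyc u c (br a b w), hsw1 c (br a b w) u]
    have e2 : br u a (br b c w) = - br (br b c w) a u := by
      rw [hcyc u a (br b c w), hsw1 a (br b c w) u]
    have e3 : br u b (br a c w) = - br (br a c w) b u := by
      rw [hcyc u b (br a c w), hsw1 b (br a c w) u]
    rw [h, e0, idF a b c w u, e1, e2, e3]; abel
  -- Rota-Baxter reductions
  have hH : ∀ x y z : A,
      R2 (br (R1 (R2 x)) (R1 (R2 y)) z + br (R1 x) (R1 (R2 y)) (R2 z)
        - br (R1 y) (R1 (R2 x)) (R2 z))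
      = br (R1 (R2 x)) (R1 (R2 y)) (R2 z) := by
    intro x y z
    have e := h2 (R1 x) (R1 y) z
    rw [← hcomm x, ← hcomm y] at e
    rw [map_add, map_add] at e
    rw [map_sub, map_add]
    rw [e]
    rw [hsw1 (R1 y) (R1 (R2 x)) (R2 z), map_neg]
    abel
  have hV : ∀ x y z : A,
      R1 (br (R1 (R2 x)) (R1 (R2 y)) z + br (R1 z) (R1 (R2 x)) (R2 y)
        - br (R1 z) (R1 (R2 y)) (R2 x))
      = br (R1 (R2 x)) (R1 (R2 y)) (R1 z) := by
    intro x y z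
    have e := h1 z (R2 x) (R2 y)
    rw [map_add, map_add] at e
    rw [map_sub, map_add]
    rw [← hcyc (R1 z) (R1 (R2 x)) (R1 (R2 y))]
    rw [e]
    rw [hsw2 (R1 z) (R1 (R2 y)) (R2 x), map_neg]
    rw [hcyc z (R1 (R2 x)) (R1 (R2 y))]
    abel
  have hC : ∀ x y z : A,
      R1 (R2 ((br (R1 (R2 x)) (R1 (R2 y)) z + br (R1 x) (R1 (R2 y)) (R2 z)
          - br (R1 y) (R1 (R2 x)) (R2 z))
        + (br (R1 (R2 y)) (R1 (R2 z)) x + br (R1 y) (R1 (R2 z)) (R2 x)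
          - br (R1 z) (R1 (R2 y)) (R2 x))
        + (br (R1 (R2 z)) (R1 (R2 x)) y + br (R1 z) (R1 (R2 x)) (R2 y)
          - br (R1 x) (R1 (R2 z)) (R2 y))))
      = br (R1 (R2 x)) (R1 (R2 y)) (R1 (R2 z)) := by
    intro x y z
    simp only [map_add]
    rw [hH x y z, hH y z x, hH z x y]
    have e := h1 (R2 x) (R2 y) (R2 z)
    rw [map_add, map_add] at e
    rw [e]
    rw [hcyc (R2 x) (R1 (R2 y)) (R1 (R2 z))]
    rw [hcyc (R1 (R2 x)) (R2 y) (R1 (R2 z)), hcyc (R2 y) (R1 (R2 z)) (R1 (R2 x))]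
    abel
  refine ⟨⟨?_, ?_, ?_⟩, ⟨?_, ?_, ?_⟩, ?_, ?_, ?_, ?_, ?_, ?_, ?_⟩
  · intro c x x' y z
    simp only [map_add, map_smul]
    exact t1 c _ _ _ _
  · intro c x y y' z
    simp only [map_add, map_smul]
    exact t2 c _ _ _ _
  · intro c x y z z'
    exact t3 c _ _ _ _
  · intro c x x' y z
    simp only [map_add, map_smul]
    exact t1 c _ _ _ _
  · intro c x y y' z
    simp only [map_add, map_smul]
    exact t2 c _ _ _ _
  · intro c x y z z'
    simp only [map_add, map_smul]
    exact t3 c _ _ _ _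
  · intro x1 x2 x3
    show br (R1 (R2 x1)) (R1 (R2 x2)) x3 + br (R1 (R2 x2)) (R1 (R2 x1)) x3 = 0
    rw [hsw1 (R1 (R2 x1)) (R1 (R2 x2)) x3]
    exact neg_add_cancel _
  · intro x1 x2 x3 x4 x5
    simp only [cOp, hOp]
    rw [hC x1 x2 x3, hC x1 x2 x4]
    exact idL1 _ _ _ _ _
  · intro x1 x2 x3 x4 x5
    simp only [cOp, hOp, vOp]
    rw [hC x1 x2 x3, hH x1 x2 x4, hV x1 x2 x5]
    exact idL2 _ _ _ _ _
  · intro x1 x2 x3 x4 x5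
    simp only [hOp, vOp]
    rw [hH x2 x3 x4, hV x1 x2 x5, hV x1 x3 x5]
    exact idL3 _ _ _ _ _
  · intro x1 x2 x3 x4 x5
    simp only [cOp, hOp]
    rw [hC x1 x2 x3]
    exact idD _ _ _ _ _
  · intro x1 x2 x3 x4 x5
    simp only [cOp, hOp]
    rw [hC x1 x2 x3]
    exact idL5 _ _ _ _ _
  · intro x1 x2 x3 x4 x5
    simp only [hOp, vOp]
    rw [hH x2 x3 x4, hH x1 x3 x4, hV x1 x2 x5]
    exact idL6 _ _ _ _ _
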